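/- Let 0 < ε < 1/5, let ξ ∈ ℝ^r be a nonzero entrywise nonnegative vector, and let q_1, …, q_n ∈ ℝ^r be nonzero entrywise nonnegative vectors ordered so that ‖q_1‖₂ ≥ ‖q_2‖₂ ≥ ⋯ ≥ ‖q_n‖₂, each satisfying q_kᵀξ ≥ (1−ε)·‖q_k‖₂·‖ξ‖₂. Let C > 0 and let S* ⊆ [n] be a nonempty set with ‖Σ_{k∈S*} q_k‖₂ ≥ C. Assume ‖Σ_{k=1}^n q_k‖₂ ≥ C and let m be the least index such that ‖Σ_{k=1}^m q_k‖₂ ≥ C. Then m ≤ |S*|/(1−5ε) + 1. -/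

import Mathlib

open RealInnerProductSpace InnerProductGeometry Real Finset

/-!
If every `q k` makes an angle at most `θ = arccos (1 - ε)` with `ξ`, the triangle inequality for
angles puts any two of them within `2θ` of each other, so `⟪q j, q k⟫ ≥ c ‖q j‖ ‖q k‖` with
`c = cos 2θ = 2 (1 - ε)² - 1 ≥ 1 - 5ε`. Consequently adding a vector `y` to a partial sum raises
its norm by at least `c ‖y‖`. Compare the greedy prefix `P = {0, …, m - 2}`, which falls short
of `C`, with the cover `S*`: the indices of `P \ S*` are long (norm `≥ d := ‖q (m - 1)‖`) and
lift `‖Σ_{P ∩ S*} q‖` by at least `c d |P \ S*|`, while those of `S* \ P` are short and lift it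
by at most `d |S* \ P|`. Hence `c |P \ S*| < |S* \ P|`, and as `c ≤ 1`, `c (m - 1) < |S*|`.
-/

section Angle

variable {V : Type*} [NormedAddCommGroup V] [InnerProductSpace ℝ V]

lemma angle_le_arccos_of_mul_norm_mul_norm_le_inner {a : ℝ} {x y : V} (hx : x ≠ 0)
    (hy : y ≠ 0) (h : a * ‖x‖ * ‖y‖ ≤ ⟪x, y⟫) : angle x y ≤ arccos a := by
  apply arccos_le_arccos
  rw [le_div_iff₀ (by positivity), ← mul_assoc]
  exact h

lemma two_mul_sq_sub_one_mul_norm_mul_norm_le_inner {a : ℝ} (ha0 : 0 ≤ a) (ha1 : a ≤ 1)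
    {x y ξ : V} (hξ : ξ ≠ 0) (hx : a * ‖x‖ * ‖ξ‖ ≤ ⟪x, ξ⟫) (hy : a * ‖y‖ * ‖ξ‖ ≤ ⟪y, ξ⟫) :
    (2 * a ^ 2 - 1) * (‖x‖ * ‖y‖) ≤ ⟪x, y⟫ := by
  rcases eq_or_ne x 0 with rfl | hx0
  · simp
  rcases eq_or_ne y 0 with rfl | hy0
  · simp
  have hangle : angle x y ≤ 2 * arccos a :=
    calc angle x y ≤ angle x ξ + angle ξ y := angle_le_angle_add_angle x ξ y
      _ ≤ arccos a + arccos a := by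
        rw [angle_comm ξ y]
        exact add_le_add (angle_le_arccos_of_mul_norm_mul_norm_le_inner hx0 hξ hx)
          (angle_le_arccos_of_mul_norm_mul_norm_le_inner hy0 hξ hy)
      _ = 2 * arccos a := by ring
  have hcos : cos (2 * arccos a) = 2 * a ^ 2 - 1 := by
    rw [cos_two_mul, cos_arccos (by linarith) ha1]
  have hπ : 2 * arccos a ≤ π := by linarith [arccos_le_pi_div_two.mpr ha0]
  rw [← hcos, ← cos_angle_mul_norm_mul_norm x y]
  gcongr
  exact cos_le_cos_of_nonneg_of_le_pi (angle_nonneg x y) hπ hangle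

end Angle

section Superadditivity

variable {E : Type*} [NormedAddCommGroup E] [InnerProductSpace ℝ E] {c : ℝ}

lemma norm_add_mul_norm_le_norm_add (hc : |c| ≤ 1) {x y : E}
    (h : c * (‖x‖ * ‖y‖) ≤ ⟪x, y⟫) : ‖x‖ + c * ‖y‖ ≤ ‖x + y‖ := by
  have hc2 : c ^ 2 ≤ 1 := by nlinarith [abs_le.mp hc]
  have hsq : (‖x‖ + c * ‖y‖) ^ 2 ≤ ‖x + y‖ ^ 2 := by
    rw [norm_add_sq_real]
    nlinarith [mul_le_mul_of_nonneg_right hc2 (sq_nonneg ‖y‖)]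
  exact le_of_sq_le_sq hsq (norm_nonneg _)

lemma mul_norm_sum_mul_norm_le_inner_sum (hc : 0 ≤ c) {ι : Type*} (s : Finset ι) (q : ι → E)
    (y : E) (h : ∀ j ∈ s, c * (‖q j‖ * ‖y‖) ≤ ⟪q j, y⟫) :
    c * (‖∑ j ∈ s, q j‖ * ‖y‖) ≤ ⟪∑ j ∈ s, q j, y⟫ :=
  calc c * (‖∑ j ∈ s, q j‖ * ‖y‖) ≤ c * ((∑ j ∈ s, ‖q j‖) * ‖y‖) := by
        gcongr
        exact norm_sum_le s q
    _ = ∑ j ∈ s, c * (‖q j‖ * ‖y‖) := by rw [sum_mul, mul_sum]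
    _ ≤ ⟪∑ j ∈ s, q j, y⟫ := by
        rw [sum_inner]
        exact sum_le_sum h

lemma norm_sum_add_mul_sum_norm_le_norm_sum_union (hc0 : 0 ≤ c) (hc1 : c ≤ 1) {ι : Type*}
    [DecidableEq ι] (q : ι → E) (T : Finset ι) {U : Finset ι} (hTU : Disjoint T U)
    (hq : ∀ j ∈ T ∪ U, ∀ k ∈ U, c * (‖q j‖ * ‖q k‖) ≤ ⟪q j, q k⟫) :
    ‖∑ j ∈ T, q j‖ + c * ∑ k ∈ U, ‖q k‖ ≤ ‖∑ j ∈ T ∪ U, q j‖ := by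
  induction U using Finset.induction_on with
  | empty => simp
  | @insert a U haU ih =>
    have haTU : a ∉ T ∪ U := by
      simp only [mem_union, not_or]
      exact ⟨disjoint_right.mp hTU (mem_insert_self a U), haU⟩
    have hstep : c * (‖∑ j ∈ T ∪ U, q j‖ * ‖q a‖) ≤ ⟪∑ j ∈ T ∪ U, q j, q a⟫ :=
      mul_norm_sum_mul_norm_le_inner_sum hc0 _ q _ fun j hj =>
        hq j (union_subset_union_right (subset_insert a U) hj) a (mem_insert_self a U)
    have hprev := ih (disjoint_insert_right.mp hTU).2 fun j hj k hk =>
      hq j (union_subset_union_right (subset_insert a U) hj) k (mem_insert_of_mem hk)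
    rw [union_insert, sum_insert haTU, sum_insert haU, add_comm (q a)]
    calc ‖∑ j ∈ T, q j‖ + c * (‖q a‖ + ∑ k ∈ U, ‖q k‖)
        = (‖∑ j ∈ T, q j‖ + c * ∑ k ∈ U, ‖q k‖) + c * ‖q a‖ := by ring
      _ ≤ ‖∑ j ∈ T ∪ U, q j‖ + c * ‖q a‖ := by gcongr
      _ ≤ ‖∑ j ∈ T ∪ U, q j + q a‖ :=
        norm_add_mul_norm_le_norm_add (abs_le.mpr ⟨by linarith, hc1⟩) hstep

end Superadditivity

section Greedy

variable {E : Type*} [NormedAddCommGroup E] [InnerProductSpace ℝ E] {c : ℝ} {q : ℕ → E} {n : ℕ}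

lemma mul_card_sdiff_lt_card_sdiff_of_norm_sum_range_lt (hc0 : 0 ≤ c) (hc1 : c ≤ 1)
    (hq : ∀ j < n, ∀ k < n, c * (‖q j‖ * ‖q k‖) ≤ ⟪q j, q k⟫)
    (hord : ∀ k k', k ≤ k' → k' < n → ‖q k'‖ ≤ ‖q k‖) {S : Finset ℕ} (hS : S ⊆ range n)
    {p : ℕ} (hp : p < n) (hlt : ‖∑ k ∈ range p, q k‖ < ‖∑ k ∈ S, q k‖) :
    c * #(range p \ S) < #(S \ range p) := by
  set P := range p
  set d := ‖q p‖
  have hlong : #(P \ S) * d ≤ ∑ k ∈ P \ S, ‖q k‖ := by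
    simpa using card_nsmul_le_sum (P \ S) (fun k => ‖q k‖) d fun k hk =>
      hord k p (mem_range.mp (mem_sdiff.mp hk).1).le hp
  have hshort : ∑ k ∈ S \ P, ‖q k‖ ≤ #(S \ P) * d := by
    simpa using sum_le_card_nsmul (S \ P) (fun k => ‖q k‖) d fun k hk => by
      obtain ⟨hkS, hkP⟩ := mem_sdiff.mp hk
      exact hord p k (not_lt.mp (mem_range.not.mp hkP)) (mem_range.mp (hS hkS))
  have hsuper : ‖∑ k ∈ P ∩ S, q k‖ + c * ∑ k ∈ P \ S, ‖q k‖ ≤ ‖∑ k ∈ P, q k‖ := by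
    have hP : P ⊆ range n := range_subset_range.mpr hp.le
    have hPS : P ∩ S ∪ P \ S = P := sup_inf_sdiff P S
    have h := norm_sum_add_mul_sum_norm_le_norm_sum_union hc0 hc1 q (P ∩ S)
      (disjoint_sdiff_inter P S).symm fun j hj k hk =>
        hq j (mem_range.mp (hP (hPS ▸ hj)))
          k (mem_range.mp (hP (mem_sdiff.mp hk).1))
    rwa [hPS] at h
  have hcover : ‖∑ k ∈ S, q k‖ ≤ ‖∑ k ∈ P ∩ S, q k‖ + ∑ k ∈ S \ P, ‖q k‖ := by
    rw [← sum_inter_add_sum_sdiff S P, inter_comm]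
    exact (norm_add_le _ _).trans (by gcongr; exact norm_sum_le _ _)
  have hd : c * #(P \ S) * d < #(S \ P) * d := by nlinarith
  exact lt_of_mul_lt_mul_right hd (norm_nonneg _)

lemma mul_lt_card_of_norm_sum_range_lt (hc0 : 0 ≤ c) (hc1 : c ≤ 1)
    (hq : ∀ j < n, ∀ k < n, c * (‖q j‖ * ‖q k‖) ≤ ⟪q j, q k⟫)
    (hord : ∀ k k', k ≤ k' → k' < n → ‖q k'‖ ≤ ‖q k‖) {S : Finset ℕ} (hS : S ⊆ range n)
    {p : ℕ} (hp : p < n) (hlt : ‖∑ k ∈ range p, q k‖ < ‖∑ k ∈ S, q k‖) :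
    c * p < #S := by
  have h := mul_card_sdiff_lt_card_sdiff_of_norm_sum_range_lt hc0 hc1 hq hord hS hp hlt
  have hP : (#(range p ∩ S) : ℝ) + #(range p \ S) = p := by
    exact_mod_cast (card_range p ▸ card_inter_add_card_sdiff (range p) S)
  have hS' : (#(range p ∩ S) : ℝ) + #(S \ range p) = #S := by
    rw [inter_comm]
    exact_mod_cast card_inter_add_card_sdiff S (range p)
  nlinarith [(#(range p ∩ S)).cast_nonneg (α := ℝ)]

end Greedy

theorem greedy_cover_cardinality_general (r n : ℕ) (ε : ℝ) (hε0 : 0 < ε) (hε1 : ε < 1/5)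
    (ξ : EuclideanSpace ℝ (Fin r)) (hξ0 : ξ ≠ 0)
    (q : ℕ → EuclideanSpace ℝ (Fin r))
    (hord : ∀ k k', k ≤ k' → k' < n → ‖q k'‖ ≤ ‖q k‖)
    (hang : ∀ k < n, ⟪q k, ξ⟫ ≥ (1 - ε) * ‖q k‖ * ‖ξ‖)
    (C : ℝ)
    (S : Finset ℕ) (hSsub : S ⊆ Finset.range n)
    (hScov : C ≤ ‖∑ k ∈ S, q k‖)
    (hall : C ≤ ‖∑ k ∈ Finset.range n, q k‖)
    (m : ℕ)
    (hmin : ∀ m' < m, ‖∑ k ∈ Finset.range m', q k‖ < C) :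
    (m : ℝ) ≤ (S.card : ℝ)/(1 - 5*ε) + 1 := by
  have hmn : m ≤ n := not_lt.mp fun h => (hmin n h).not_ge hall
  have h5 : 0 < 1 - 5 * ε := by linarith
  obtain _ | p := m
  · simp only [CharP.cast_eq_zero]
    positivity
  have hpair : ∀ j < n, ∀ k < n,
      (2 * (1 - ε) ^ 2 - 1) * (‖q j‖ * ‖q k‖) ≤ ⟪q j, q k⟫ := fun j hj k hk =>
    two_mul_sq_sub_one_mul_norm_mul_norm_le_inner (by linarith) (by linarith) hξ0
      (hang j hj) (hang k hk)
  have hp := mul_lt_card_of_norm_sum_range_lt (by nlinarith) (by nlinarith) hpair hord hSsub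
    (by omega) ((hmin p p.lt_succ_self).trans_le hScov)
  rw [Nat.cast_succ, add_le_add_iff_right, le_div_iff₀ h5]
  nlinarith [mul_nonneg (by positivity : 0 ≤ ε + 2 * ε ^ 2) p.cast_nonneg]

/-- Greedy cardinality bound: with nonzero nonnegative vectors `q 0, …, q (n-1)` sorted in
nonincreasing order of Euclidean norm, all within angle `cos⁻¹(1-ε)` of a common nonzero
nonnegative direction `ξ`, if `S* ⊆ [n]` is a feasible cover (`‖Σ_{k∈S*} q k‖ ≥ C`) and
`m` is the least index with `‖Σ_{k<m} q k‖ ≥ C`, then `m ≤ |S*|/(1-5ε) + 1`. -/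
theorem greedy_cover_cardinality (r n : ℕ) (ε : ℝ) (hε0 : 0 < ε) (hε1 : ε < 1/5)
    (ξ : EuclideanSpace ℝ (Fin r)) (hξ0 : ξ ≠ 0) (hξ : ∀ i, 0 ≤ ξ i)
    (q : ℕ → EuclideanSpace ℝ (Fin r))
    (hq0 : ∀ k < n, q k ≠ 0)
    (hqnn : ∀ k < n, ∀ i, 0 ≤ q k i)
    (hord : ∀ k k', k ≤ k' → k' < n → ‖q k'‖ ≤ ‖q k‖)
    (hang : ∀ k < n, ⟪q k, ξ⟫ ≥ (1 - ε) * ‖q k‖ * ‖ξ‖)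
    (C : ℝ) (hC : 0 < C)
    (S : Finset ℕ) (hSsub : S ⊆ Finset.range n) (hSne : S.Nonempty)
    (hScov : C ≤ ‖∑ k ∈ S, q k‖)
    (hall : C ≤ ‖∑ k ∈ Finset.range n, q k‖)
    (m : ℕ)
    (hm : C ≤ ‖∑ k ∈ Finset.range m, q k‖)
    (hmin : ∀ m' < m, ‖∑ k ∈ Finset.range m', q k‖ < C) :
    (m : ℝ) ≤ (S.card : ℝ)/(1 - 5*ε) + 1 :=
  greedy_cover_cardinality_general r n ε hε0 hε1 ξ hξ0 q hord hang C S hSsub hScov hall m hmin
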